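/- For a central hyperplane arrangement with n hyperplanes in which any two dependent 3-element subsets share at most one element, dim(I₂³) = dim(span C₃) + dim(span F₃), where I₂³ = I²·E¹ is the degree-3 part of the ideal generated by I², C₃ = {e_t∂e_S : S dependent triple, t ∈ S}, F₃ = {e_t∂e_S : S dependent triple, t ∉ S}; i.e., span(C₃) ⊕ span(F₃) = I₂³. -/

import Mathlib

/-!
For a dependent triple `S`, `e_t ∧ ∂e_S = e_S` whenever `t ∈ S`, so `span C₃` lies in the
span of the monomials `e_S` with `S` dependent. For `t ∉ S`, `e_t ∧ ∂e_S` is a combination of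
monomials `e_{t,u,v}` with `{u, v} ⊆ S`; such a triple shares two points with `S` without
being `S`, so it is not dependent. The coordinate projection onto `span {e_S : S dependent}`
therefore fixes `span C₃` and kills `span F₃`, which forces `span C₃ ⊓ span F₃ = ⊥`. The sum
is `I₂³` because `C₃ ∪ F₃` is its generating set.
-/

open ExteriorAlgebra

variable (n : ℕ)

/-- The standard generator `e i` of the exterior algebra `E = Λ(ℂⁿ)`. -/
noncomputable def gen (i : Fin n) : ExteriorAlgebra ℂ (Fin n → ℂ) :=
  ι ℂ (Pi.single i (1 : ℂ))

/-- `∂e_{ijk} = e_j ∧ e_k - e_i ∧ e_k + e_i ∧ e_j`. -/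
noncomputable def bdry (i j k : Fin n) : ExteriorAlgebra ℂ (Fin n → ℂ) :=
  gen n j * gen n k - gen n i * gen n k + gen n i * gen n j

theorem Submodule.span_inf_span_eq_bot_of_linearMap {R M : Type*} [Semiring R]
    [AddCommMonoid M] [Module R M] {s t : Set M} (f : M →ₗ[R] M)
    (hs : ∀ x ∈ s, f x = x) (ht : ∀ x ∈ t, f x = 0) :
    span R s ⊓ span R t = ⊥ := by
  have hs' : span R s ≤ LinearMap.eqLocus f LinearMap.id := span_le.2 hs
  have ht' : span R t ≤ LinearMap.ker f := span_le.2 ht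
  exact eq_bot_iff.2 fun x ⟨hxs, hxt⟩ => (hs' hxs).symm.trans (ht' hxt)

namespace ExteriorAlgebra

variable {R ι : Type*} [CommRing R] [DecidableEq ι] {m : ℕ}

/-- The coefficient of `e_{s 0} ∧ ⋯ ∧ e_{s (m-1)}` in the standard basis of `Λ(R^ι)`. -/
noncomputable def coeff (s : Fin m → ι) : ExteriorAlgebra R (ι → R) →ₗ[R] R :=
  liftAlternating (Function.update 0 m
    (Matrix.detRowAlternating.compLinearMap (LinearMap.funLeft R R s)))

theorem coeff_ιMulti_single (s a : Fin m → ι) :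
    coeff s (ιMulti R m fun r => Pi.single (a r) 1) =
      (Matrix.of fun r c => if a r = s c then (1 : R) else 0).det := by
  rw [coeff, liftAlternating_apply_ιMulti, Function.update_self]
  simp only [AlternatingMap.compLinearMap_apply, Matrix.detRowAlternating]
  congr 1
  ext r c
  simp [Pi.single_apply, eq_comm]

theorem coeff_ιMulti_single_self {s : Fin m → ι} (hs : Function.Injective s) :
    coeff s (ιMulti R m fun r => Pi.single (s r) 1) = (1 : R) := by
  rw [coeff_ιMulti_single, ← Matrix.det_one (n := Fin m)]
  congr 1
  ext r c
  simp [Matrix.one_apply, hs.eq_iff]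

theorem coeff_ιMulti_single_eq_zero {s a : Fin m → ι} (r : Fin m) (hr : a r ∉ Set.range s) :
    coeff s (ιMulti R m fun r => Pi.single (a r) 1) = (0 : R) := by
  rw [coeff_ιMulti_single]
  exact Matrix.det_eq_zero_of_row_eq_zero r fun c => if_neg fun h => hr ⟨c, h.symm⟩

end ExteriorAlgebra

section

variable {n}

theorem gen_mul_gen_mul_gen (a b c : Fin n) :
    gen n a * gen n b * gen n c = ιMulti ℂ 3 fun r => Pi.single (![a, b, c] r) 1 := by
  simp [ιMulti_apply, gen, mul_assoc, Matrix.vecTail]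

theorem gen_mul_self (a : Fin n) : gen n a * gen n a = 0 := ι_sq_zero _

theorem gen_mul_comm (a b : Fin n) : gen n a * gen n b = -(gen n b * gen n a) :=
  eq_neg_of_add_eq_zero_left (ι_add_mul_swap _ _)

theorem gen_mul_gen_mul_left (a b : Fin n) : gen n a * gen n b * gen n a = 0 := by
  rw [gen_mul_comm a b, neg_mul, mul_assoc, gen_mul_self, mul_zero, neg_zero]

theorem gen_mul_bdry_of_mem {i j k t : Fin n} (ht : t ∈ ({i, j, k} : Finset (Fin n))) :
    gen n t * bdry n i j k = gen n i * gen n j * gen n k := by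
  simp only [Finset.mem_insert, Finset.mem_singleton] at ht
  rcases ht with rfl | rfl | rfl <;>
    simp only [bdry, mul_add, mul_sub, ← mul_assoc, gen_mul_self, zero_mul,
      gen_mul_gen_mul_left, sub_zero, add_zero, zero_sub, zero_add]
  · rw [gen_mul_comm t i, neg_mul, neg_neg]
  · rw [gen_mul_comm t i, neg_mul, mul_assoc, gen_mul_comm t j, mul_neg, neg_neg, mul_assoc]

theorem coeff_gen_mul_gen_mul_gen_self {a b c : Fin n} (hab : a ≠ b) (hac : a ≠ c)
    (hbc : b ≠ c) : coeff ![a, b, c] (gen n a * gen n b * gen n c) = 1 := by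
  rw [gen_mul_gen_mul_gen]
  refine coeff_ιMulti_single_self fun r s h => ?_
  fin_cases r <;> fin_cases s <;> simp_all [eq_comm]

theorem coeff_gen_mul_gen_mul_gen_eq_zero {a b c t u v : Fin n}
    (h : ¬ ({t, u, v} : Finset (Fin n)) ⊆ {a, b, c}) :
    coeff ![a, b, c] (gen n t * gen n u * gen n v) = 0 := by
  obtain ⟨x, hx, hxabc⟩ := Finset.not_subset.1 h
  have hx' : x ∉ Set.range ![a, b, c] := by
    simpa [Matrix.range_cons, or_comm, or_left_comm] using hxabc
  rw [gen_mul_gen_mul_gen]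
  simp only [Finset.mem_insert, Finset.mem_singleton] at hx
  rcases hx with rfl | rfl | rfl
  exacts [coeff_ιMulti_single_eq_zero 0 hx', coeff_ιMulti_single_eq_zero 1 hx',
    coeff_ιMulti_single_eq_zero 2 hx']

theorem eq_of_triple_subset {α : Type*} [LinearOrder α] {i j k a b c : α}
    (hij : i < j) (hjk : j < k) (hab : a < b) (hbc : b < c)
    (h : ({i, j, k} : Finset α) ⊆ {a, b, c}) : i = a ∧ j = b ∧ k = c := by
  simp only [Finset.insert_subset_iff, Finset.singleton_subset_iff, Finset.mem_insert,
    Finset.mem_singleton] at h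
  obtain ⟨hi | hi | hi, hj | hj | hj, hk | hk | hk⟩ := h <;> subst hi hj hk <;>
    first | exact ⟨rfl, rfl, rfl⟩ | (exfalso; order)

theorem Finset.not_insert_pair_subset {α : Type*} [DecidableEq α] {S S' : Finset α}
    {t u v : α} (hSS' : S' ≠ S → (S' ∩ S).card ≤ 1) (ht : t ∉ S) (hu : u ∈ S) (hv : v ∈ S)
    (huv : u ≠ v) : ¬ {t, u, v} ⊆ S' := by
  intro h
  obtain rfl | hne := eq_or_ne S' S
  · exact ht (h (by simp))
  have huv' : ({u, v} : Finset α) ⊆ S' ∩ S := by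
    simp_all [Finset.insert_subset_iff]
  have htwo : 2 ≤ (S' ∩ S).card := Finset.card_pair huv ▸ Finset.card_le_card huv'
  exact absurd (hSS' hne) (by omega)

noncomputable def monomialProj (D : Finset (Fin n × Fin n × Fin n)) :
    ExteriorAlgebra ℂ (Fin n → ℂ) →ₗ[ℂ] ExteriorAlgebra ℂ (Fin n → ℂ) :=
  ∑ p ∈ D, (coeff ![p.1, p.2.1, p.2.2]).smulRight (gen n p.1 * gen n p.2.1 * gen n p.2.2)

theorem monomialProj_apply (D : Finset (Fin n × Fin n × Fin n))
    (x : ExteriorAlgebra ℂ (Fin n → ℂ)) :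
    monomialProj D x =
      ∑ p ∈ D, coeff ![p.1, p.2.1, p.2.2] x • (gen n p.1 * gen n p.2.1 * gen n p.2.2) := by
  simp [monomialProj]

theorem monomialProj_gen_mul_gen_mul_gen_of_mem {D : Finset (Fin n × Fin n × Fin n)}
    (hD : ∀ p ∈ D, p.1 < p.2.1 ∧ p.2.1 < p.2.2) {i j k : Fin n} (hijk : (i, j, k) ∈ D) :
    monomialProj D (gen n i * gen n j * gen n k) = gen n i * gen n j * gen n k := by
  obtain ⟨hij, hjk⟩ := hD _ hijk
  rw [monomialProj_apply, Finset.sum_eq_single_of_mem _ hijk,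
    coeff_gen_mul_gen_mul_gen_self hij.ne (hij.trans hjk).ne hjk.ne, one_smul]
  rintro ⟨a, b, c⟩ habc hne
  obtain ⟨hab, hbc⟩ := hD _ habc
  rw [coeff_gen_mul_gen_mul_gen_eq_zero, zero_smul]
  intro h
  obtain ⟨rfl, rfl, rfl⟩ := eq_of_triple_subset hij hjk hab hbc h
  exact hne rfl

theorem monomialProj_gen_mul_gen_mul_gen_eq_zero {D : Finset (Fin n × Fin n × Fin n)}
    {t u v : Fin n}
    (hD : ∀ p ∈ D, ¬ ({t, u, v} : Finset (Fin n)) ⊆ {p.1, p.2.1, p.2.2}) :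
    monomialProj D (gen n t * gen n u * gen n v) = 0 :=
  (monomialProj_apply D _).trans <| Finset.sum_eq_zero fun p hp => by
    rw [coeff_gen_mul_gen_mul_gen_eq_zero (hD p hp), zero_smul]

theorem monomialProj_gen_mul_bdry_eq_zero {D : Finset (Fin n × Fin n × Fin n)}
    {i j k t : Fin n} (hij : i ≠ j) (hik : i ≠ k) (hjk : j ≠ k)
    (ht : t ∉ ({i, j, k} : Finset (Fin n)))
    (hD : ∀ p ∈ D, ({p.1, p.2.1, p.2.2} : Finset (Fin n)) ≠ {i, j, k} →
      (({p.1, p.2.1, p.2.2} : Finset (Fin n)) ∩ {i, j, k}).card ≤ 1) :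
    monomialProj D (gen n t * bdry n i j k) = 0 := by
  have hzero {u v} (hu : u ∈ ({i, j, k} : Finset (Fin n)))
      (hv : v ∈ ({i, j, k} : Finset (Fin n))) (huv : u ≠ v) :
      monomialProj D (gen n t * gen n u * gen n v) = 0 :=
    monomialProj_gen_mul_gen_mul_gen_eq_zero fun p hp =>
      Finset.not_insert_pair_subset (hD p hp) ht hu hv huv
  simp only [bdry, mul_add, mul_sub, ← mul_assoc, map_add, map_sub]
  rw [hzero (by simp) (by simp) hjk, hzero (by simp) (by simp) hik,
    hzero (by simp) (by simp) hij, sub_zero, add_zero]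

end

theorem span_C3_sup_span_F3_eq_I23
    (Dep : Set (Finset (Fin n)))
    (hshare : ∀ S ∈ Dep, ∀ S' ∈ Dep, S ≠ S' → (S ∩ S').card ≤ 1) :
    Submodule.span ℂ {x | ∃ i j k : Fin n, i < j ∧ j < k ∧
        ({i, j, k} : Finset (Fin n)) ∈ Dep ∧
        ∃ t ∈ ({i, j, k} : Finset (Fin n)), x = gen n t * bdry n i j k} ⊓
      Submodule.span ℂ {x | ∃ i j k : Fin n, i < j ∧ j < k ∧
        ({i, j, k} : Finset (Fin n)) ∈ Dep ∧
        ∃ t ∉ ({i, j, k} : Finset (Fin n)), x = gen n t * bdry n i j k} = ⊥ ∧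
    Submodule.span ℂ {x | ∃ i j k : Fin n, i < j ∧ j < k ∧
        ({i, j, k} : Finset (Fin n)) ∈ Dep ∧
        ∃ t ∈ ({i, j, k} : Finset (Fin n)), x = gen n t * bdry n i j k} ⊔
      Submodule.span ℂ {x | ∃ i j k : Fin n, i < j ∧ j < k ∧
        ({i, j, k} : Finset (Fin n)) ∈ Dep ∧
        ∃ t ∉ ({i, j, k} : Finset (Fin n)), x = gen n t * bdry n i j k} =
      Submodule.span ℂ {x | ∃ i j k : Fin n, i < j ∧ j < k ∧
        ({i, j, k} : Finset (Fin n)) ∈ Dep ∧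
        ∃ t : Fin n, x = gen n t * bdry n i j k} := by
  classical
  let D : Finset (Fin n × Fin n × Fin n) := {p | p.1 < p.2.1 ∧ p.2.1 < p.2.2 ∧
    ({p.1, p.2.1, p.2.2} : Finset (Fin n)) ∈ Dep}
  refine ⟨Submodule.span_inf_span_eq_bot_of_linearMap (monomialProj D) ?_ ?_, ?_⟩
  · rintro _ ⟨i, j, k, hij, hjk, hS, t, ht, rfl⟩
    rw [gen_mul_bdry_of_mem ht]
    exact monomialProj_gen_mul_gen_mul_gen_of_mem
      (fun _ hp => (Finset.mem_filter.1 hp).2.imp_right And.left) (by simp [D, hij, hjk, hS])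
  · rintro _ ⟨i, j, k, hij, hjk, hS, t, ht, rfl⟩
    exact monomialProj_gen_mul_bdry_eq_zero (D := D) hij.ne (hij.trans hjk).ne hjk.ne ht
      fun p hp => hshare _ (Finset.mem_filter.1 hp).2.2.2 _ hS
  · rw [← Submodule.span_union]
    congr 1
    ext x
    constructor
    · rintro (⟨i, j, k, hij, hjk, hS, t, -, rfl⟩ | ⟨i, j, k, hij, hjk, hS, t, -, rfl⟩) <;>
        exact ⟨i, j, k, hij, hjk, hS, t, rfl⟩
    · rintro ⟨i, j, k, hij, hjk, hS, t, rfl⟩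
      by_cases ht : t ∈ ({i, j, k} : Finset (Fin n))
      exacts [Or.inl ⟨i, j, k, hij, hjk, hS, t, ht, rfl⟩,
        Or.inr ⟨i, j, k, hij, hjk, hS, t, ht, rfl⟩]
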